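/- There exists a constant c > 0 such that for every n ∈ ℕ divisible by 7 and every vtree T over {x_1, …, x_n}, the factor width of the hidden weighted bit function HWB_n with respect to T is at least 2^{cn}; in particular, every TDD (respecting any vtree over {x_1, …, x_n}) computing HWB_n has size at least 2^{cn}. -/

import Mathlib

/-- A vtree: a rooted binary tree whose leaves are labeled by variables. -/
inductive Vtree (V : Type) where
  | leaf : V → Vtree V
  | node : Vtree V → Vtree V → Vtree V

namespace Vtree

variable {V : Type} [DecidableEq V]

/-- The set of variables labeling the leaves of a vtree. -/
def vars : Vtree V → Finset V
  | leaf x => {x}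
  | node l r => l.vars ∪ r.vars

/-- A vtree is proper when its leaves carry pairwise distinct variables,
so that the leaves are in one-to-one correspondence with `vars`. -/
def Proper : Vtree V → Prop
  | leaf _ => True
  | node l r => l.Proper ∧ r.Proper ∧ Disjoint l.vars r.vars

/-- `T.IsNode t` : `t` is (the subtree rooted at) a node of `T`. -/
def IsNode : Vtree V → Vtree V → Prop
  | leaf x, t => t = leaf x
  | node l r, t => t = node l r ∨ l.IsNode t ∨ r.IsNode t

/-- Remove every leaf whose variable is in `Y`, suppressing unary nodes.
Returns `none` if no leaf survives. -/
def restrict (Y : Finset V) : Vtree V → Option (Vtree V)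
  | leaf x => if x ∈ Y then none else some (leaf x)
  | node l r =>
    match l.restrict Y, r.restrict Y with
    | none, o => o
    | some l', none => some l'
    | some l', some r' => some (node l' r')

/-- The vtree `T ∖ x`. -/
def remove (x : V) (T : Vtree V) : Option (Vtree V) := T.restrict {x}

/-- A vtree is linear when every internal node has a leaf child. -/
def Linear : Vtree V → Prop
  | leaf _ => True
  | node l r => ((∃ x, l = leaf x) ∨ (∃ x, r = leaf x)) ∧ l.Linear ∧ r.Linear

/-- The variable order induced by a linear vtree. -/
def order : Vtree V → List V
  | leaf x => [x]
  | node (leaf x) r => x :: r.order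
  | node l (leaf x) => x :: l.order
  | node l r => l.order ++ r.order

end Vtree

/-- Labels of leaf-layer nodes of a TDD: the positive literal, the negative
literal, and the constants 1 and 0. -/
inductive TLab where
  | pos | neg | one | zero
deriving DecidableEq

/-- Disjunction of two leaf labels (used when contracting twin leaf nodes). -/
def TLab.lor : TLab → TLab → TLab
  | .zero, a => a
  | a, .zero => a
  | .one, _ => .one
  | _, .one => .one
  | .pos, .pos => .pos
  | .neg, .neg => .neg
  | .pos, .neg => .one
  | .neg, .pos => .one

/-- A (non-deterministic) tree decision diagram structured along a vtree:
one layer of nodes (identified by natural numbers) per vtree node; leaf-layer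
nodes carry labels, internal-layer nodes carry their sets of input pairs. -/
inductive NTDD (V : Type) where
  | leaf (x : V) (ns : Finset ℕ) (lab : ℕ → TLab)
  | node (l r : NTDD V) (ns : Finset ℕ) (E : ℕ → Finset (ℕ × ℕ))

namespace NTDD

variable {V : Type}

/-- The vtree that an nTDD is structured along. -/
def shape : NTDD V → Vtree V
  | leaf x _ _ => .leaf x
  | node l r _ _ => .node l.shape r.shape

/-- The set of nodes of the top (root) layer. -/
def nodes : NTDD V → Finset ℕ
  | leaf _ ns _ => ns
  | node _ _ ns _ => ns

/-- The size of an nTDD: the total number of input pairs. -/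
def size : NTDD V → ℕ
  | leaf _ _ _ => 0
  | node l r ns E => l.size + r.size + ∑ g ∈ ns, (E g).card

/-- The width of an nTDD: the maximal cardinality of a layer. -/
def width : NTDD V → ℕ
  | leaf _ ns _ => ns.card
  | node l r ns _ => max ns.card (max l.width r.width)

/-- `C.sat g τ` : (the restriction of) the assignment `τ` is a model of the
function `f_g` computed by the top-layer node `g` of `C`. -/
def sat : NTDD V → ℕ → (V → Bool) → Prop
  | leaf x _ lab, g, τ =>
    match lab g with
    | .pos => τ x = true
    | .neg => τ x = false
    | .one => True
    | .zero => False
  | node l r _ E, g, τ => ∃ p ∈ E g, l.sat p.1 τ ∧ r.sat p.2 τ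

/-- Well-formedness: input pairs of top-layer nodes reference nodes of the
children layers. -/
def WF : NTDD V → Prop
  | leaf _ _ _ => True
  | node l r ns E => l.WF ∧ r.WF ∧ ∀ g ∈ ns, ∀ p ∈ E g, p.1 ∈ l.nodes ∧ p.2 ∈ r.nodes

/-- Determinism, turning an nTDD into a TDD: at each leaf layer at most one
node labeled by each of `x`, `¬x`, `1`, and if a node is labeled `1` then all
other nodes are labeled `0`; at each internal layer every pair is the input of
at most one node. -/
def Det : NTDD V → Prop
  | leaf _ ns lab =>
      (∀ g ∈ ns, ∀ g' ∈ ns, lab g = TLab.pos → lab g' = TLab.pos → g = g') ∧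
      (∀ g ∈ ns, ∀ g' ∈ ns, lab g = TLab.neg → lab g' = TLab.neg → g = g') ∧
      (∀ g ∈ ns, ∀ g' ∈ ns, lab g = TLab.one → lab g' = TLab.one → g = g') ∧
      (∀ g ∈ ns, lab g = TLab.one → ∀ g' ∈ ns, g' ≠ g → lab g' = TLab.zero)
  | node l r ns E => l.Det ∧ r.Det ∧ ∀ g ∈ ns, ∀ g' ∈ ns, g ≠ g' → Disjoint (E g) (E g')

/-- `C.Subdiagram D` : `D` is the sub-diagram of `C` sitting at some node of
the underlying vtree (including `C` itself). -/
def Subdiagram : NTDD V → NTDD V → Prop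
  | leaf x ns lab, D => D = leaf x ns lab
  | node l r ns E, D => D = node l r ns E ∨ l.Subdiagram D ∨ r.Subdiagram D

/-- A TDD is full if, at every layer, every assignment is a model of some node
of that layer. -/
def Full (C : NTDD V) : Prop :=
  ∀ D : NTDD V, C.Subdiagram D → ∀ τ : V → Bool, ∃ g ∈ D.nodes, D.sat g τ

end NTDD

/-- A choice of one node id per vtree node, mirroring the vtree: the data of a
certificate. -/
inductive IdTree where
  | leaf (g : ℕ)
  | node (g : ℕ) (l r : IdTree)

/-- The id chosen at the root. -/
def IdTree.root : IdTree → ℕ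
  | .leaf g => g
  | .node g _ _ => g

namespace NTDD

variable {V : Type}

/-- `C.IsCert P τ` : the choice `P` of one node per layer is a certificate for
`τ` in `C` (except for the root condition `P.root = out`, stated separately):
at a leaf labeled `x` the chosen node is labeled `1` or by a literal satisfied
by `τ`, and at an internal node the chosen pair of children nodes is an input
of the chosen node. -/
def IsCert : NTDD V → IdTree → (V → Bool) → Prop
  | leaf x ns lab, IdTree.leaf g, τ =>
      g ∈ ns ∧ (lab g = TLab.one ∨ (lab g = TLab.pos ∧ τ x = true) ∨
        (lab g = TLab.neg ∧ τ x = false))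
  | node l r ns E, IdTree.node g pl pr, τ =>
      g ∈ ns ∧ (pl.root, pr.root) ∈ E g ∧ l.IsCert pl τ ∧ r.IsCert pr τ
  | _, _, _ => False

/-- `SubPair C P D Q` : `D` is the sub-diagram of `C` at some vtree node `t`,
and `Q` is the corresponding part of the certificate data `P` (so `Q.root` is
the node that `P` chooses at `t`). -/
def SubPair : NTDD V → IdTree → NTDD V → IdTree → Prop
  | leaf x ns lab, P, D, Q => D = leaf x ns lab ∧ Q = P
  | node l r ns E, P, D, Q =>
      (D = node l r ns E ∧ Q = P) ∨
      (match P with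
       | IdTree.node _ pl pr => l.SubPair pl D Q ∨ r.SubPair pr D Q
       | _ => False)

/-- Contract the two top-layer nodes `g1, g1'` into the fresh node `v`. -/
def contractLayer (g1 g1' v : ℕ) : NTDD V → NTDD V
  | leaf x ns lab =>
      leaf x (insert v ((ns.erase g1).erase g1'))
        (fun g => if g = v then (lab g1).lor (lab g1') else lab g)
  | node l r ns E =>
      node l r (insert v ((ns.erase g1).erase g1'))
        (fun g => if g = v then E g1 ∪ E g1' else E g)

/-- Twin contraction of nodes `g1, g1'` of the left child layer into `v`:
they are merged in the left layer, and every input pair `(g1, g2)` or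
`(g1', g2)` of a top-layer node is replaced by `(v, g2)`. -/
def contractAtL (g1 g1' v : ℕ) : NTDD V → NTDD V
  | node l r ns E =>
      node (l.contractLayer g1 g1' v) r ns
        (fun g => (E g).image (fun p => if p.1 = g1 ∨ p.1 = g1' then (v, p.2) else p))
  | C => C

/-- Twin contraction of nodes `g1, g1'` of the right child layer into `v`. -/
def contractAtR (g1 g1' v : ℕ) : NTDD V → NTDD V
  | node l r ns E =>
      node l (r.contractLayer g1 g1' v) ns
        (fun g => (E g).image (fun p => if p.2 = g1 ∨ p.2 = g1' then (p.1, v) else p))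
  | C => C

open Classical in
/-- Replace the sub-diagram `D` of `C` by `D'` (in a proper vtree, sub-diagrams
at distinct positions are distinct, so this is unambiguous). -/
noncomputable def replace : NTDD V → NTDD V → NTDD V → NTDD V
  | leaf x ns lab, D, D' => if leaf x ns lab = D then D' else leaf x ns lab
  | node l r ns E, D, D' =>
      if node l r ns E = D then D'
      else node (l.replace D D') (r.replace D D') ns E

/-- `g1` and `g1'` are twins of the left child layer: they have the same
siblings with respect to every top-layer node. -/
def TwinsL (g1 g1' : ℕ) : NTDD V → Prop
  | node l _ ns E => g1 ∈ l.nodes ∧ g1' ∈ l.nodes ∧ g1 ≠ g1' ∧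
      ∀ g ∈ ns, ∀ g2 : ℕ, ((g1, g2) ∈ E g ↔ (g1', g2) ∈ E g)
  | _ => False

/-- `g1` and `g1'` are twins of the right child layer. -/
def TwinsR (g1 g1' : ℕ) : NTDD V → Prop
  | node _ r ns E => g1 ∈ r.nodes ∧ g1' ∈ r.nodes ∧ g1 ≠ g1' ∧
      ∀ g ∈ ns, ∀ g2 : ℕ, ((g2, g1) ∈ E g ↔ (g2, g1') ∈ E g)
  | _ => False

/-- The node set of the left child layer. -/
def leftNodes : NTDD V → Finset ℕ
  | node l _ _ _ => l.nodes
  | _ => ∅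

/-- The node set of the right child layer. -/
def rightNodes : NTDD V → Finset ℕ
  | node _ r _ _ => r.nodes
  | _ => ∅

end NTDD

/-- The number of distinct non-trivial `Y`-subfunctions of the Boolean
function `f` : functions of the form `σ ↦ f (Y.piecewise τ σ)` for some
`τ`, having at least one model. -/
noncomputable def subCount {V : Type} [DecidableEq V] (f : (V → Bool) → Prop) (Y : Finset V) : ℕ :=
  Nat.card {h : (V → Bool) → Prop |
    (∃ τ : V → Bool, h = fun σ => f (Y.piecewise τ σ)) ∧ ∃ σ : V → Bool, h σ}

/-- The number of distinct `Y`-subfunctions of `f` (trivial ones included). -/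
noncomputable def subCountAll {V : Type} [DecidableEq V] (f : (V → Bool) → Prop) (Y : Finset V) : ℕ :=
  Nat.card {h : (V → Bool) → Prop |
    ∃ τ : V → Bool, h = fun σ => f (Y.piecewise τ σ)}

/-- The hidden weighted bit function over variables `{x_1, …, x_n}` (variables
named by natural numbers): `HWB n τ` holds iff `S ≥ 1` and `τ S = true`,
where `S` is the number of variables in `{1, …, n}` set to `true` by `τ`. -/
def HWB (n : ℕ) (τ : ℕ → Bool) : Prop :=
  1 ≤ (∑ i ∈ Finset.Icc 1 n, if τ i then 1 else 0) ∧
    τ (∑ i ∈ Finset.Icc 1 n, if τ i then 1 else 0) = true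


/-!
Take a vtree node whose variable set `Y` has between `n/4` and `n/2` elements and put
`j = |Y|/6`. The windows of positions `[w, w + n - |Y|]` starting at `j` and at `|Y| - j` cover
all of `Y` but `2j - 1` elements, so one of them contains a set `D` of `2j` variables of `Y`.
Setting `w` variables of `Y` to one, `j` of them in `D`, the variables outside `Y` can still
bring the weight to any position of `D`, where `HWB` reads off whether that position is one of the
`j` chosen ones: this gives `binom(2j, j) ≥ 2^j` distinct nontrivial subfunctions. For small `n`
a node with two leaf children already has two.

In a TDD, determinism and locality make every nontrivial subfunction at an internal vtree node
correspond to a distinct node of that layer having an input, so the size bounds the factor width.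
-/

open Finset

namespace Vtree

variable {V : Type}

theorem isNode_self : ∀ T : Vtree V, T.IsNode T
  | leaf _ => rfl
  | node _ _ => Or.inl rfl

theorem eq_leaf_or_exists_isNode_node_leaf_leaf (T : Vtree V) :
    (∃ x, T = leaf x) ∨ ∃ p q, T.IsNode (node (leaf p) (leaf q)) := by
  induction T with
  | leaf x => exact Or.inl ⟨x, rfl⟩
  | node l r ihl ihr =>
    refine Or.inr ?_
    rcases ihl with ⟨x, rfl⟩ | ⟨p, q, h⟩
    · rcases ihr with ⟨y, rfl⟩ | ⟨p, q, h⟩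
      · exact ⟨x, y, Or.inl rfl⟩
      · exact ⟨p, q, Or.inr (Or.inr h)⟩
    · exact ⟨p, q, Or.inr (Or.inl h)⟩

variable [DecidableEq V]

theorem vars_nonempty : ∀ T : Vtree V, T.vars.Nonempty
  | leaf x => singleton_nonempty x
  | node l _ => l.vars_nonempty.mono subset_union_left

theorem IsNode.vars_subset {T t : Vtree V} (h : T.IsNode t) : t.vars ⊆ T.vars := by
  induction T with
  | leaf x => rw [h]
  | node l r ihl ihr =>
    rcases h with rfl | h | h
    · exact Subset.rfl
    · exact (ihl h).trans subset_union_left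
    · exact (ihr h).trans subset_union_right

theorem IsNode.proper {T t : Vtree V} (hT : T.Proper) (h : T.IsNode t) : t.Proper := by
  induction T with
  | leaf x => rwa [h]
  | node l r ihl ihr =>
    rcases h with rfl | h | h
    · exact hT
    · exact ihl hT.1 h
    · exact ihr hT.2.1 h

/-- Descending into the larger child at most halves the number of variables. -/
theorem exists_isNode_card_vars_le {T : Vtree V} (hT : T.Proper) {K : ℕ} (hK : 2 ≤ K)
    (hKT : K ≤ #T.vars) : ∃ t, T.IsNode t ∧ K ≤ #t.vars ∧ #t.vars ≤ 2 * K - 2 := by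
  induction T with
  | leaf x => simp only [vars, card_singleton] at hKT; omega
  | node l r ihl ihr =>
    by_cases hle : #(node l r).vars ≤ 2 * K - 2
    · exact ⟨_, isNode_self _, hKT, hle⟩
    have hcard : #(node l r).vars = #l.vars + #r.vars := card_union_of_disjoint hT.2.2
    rcases le_total #l.vars #r.vars with hlr | hlr
    · obtain ⟨t, ht, h⟩ := ihr hT.2.1 (by omega)
      exact ⟨t, Or.inr (Or.inr ht), h⟩
    · obtain ⟨t, ht, h⟩ := ihl hT.1 (by omega)
      exact ⟨t, Or.inr (Or.inl ht), h⟩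

end Vtree

section Subfunctions

variable {V : Type} [DecidableEq V] {f : (V → Bool) → Prop} {Y : Finset V}

theorem finite_subfunctions :
    {h : (V → Bool) → Prop |
      (∃ τ : V → Bool, h = fun σ => f (Y.piecewise τ σ)) ∧ ∃ σ : V → Bool, h σ}.Finite := by
  refine ((Y.powerset : Set (Finset V)).toFinite.image
    fun A σ => f (Y.piecewise (fun i => decide (i ∈ A)) σ)).subset ?_
  rintro h ⟨⟨τ, rfl⟩, -⟩
  refine ⟨Y.filter (τ · = true), mem_coe.2 (mem_powerset.2 (filter_subset _ _)), funext fun σ => ?_⟩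
  change f _ = f _
  congr 1
  exact Y.piecewise_congr (fun i hi => by simp [hi]) fun _ _ => rfl

theorem card_le_subCount {ι : Type} (s : Finset ι) (τ : ι → V → Bool)
    (hmodel : ∀ i ∈ s, ∃ σ, f (Y.piecewise (τ i) σ))
    (hinj : Set.InjOn (fun i σ => f (Y.piecewise (τ i) σ)) s) :
    #s ≤ subCount f Y := by
  rw [subCount, Nat.card_coe_set_eq, ← Set.ncard_coe_finset, ← hinj.ncard_image]
  exact Set.ncard_le_ncard (by rintro _ ⟨i, hi, rfl⟩; exact ⟨⟨τ i, rfl⟩, hmodel i hi⟩)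
    finite_subfunctions

theorem subCount_le_card {β : Type} (κ : (V → Bool) → β) (G : Finset β)
    (hG : ∀ τ σ, f (Y.piecewise τ σ) → κ τ ∈ G)
    (hκ : ∀ τ τ', κ τ = κ τ' → ∀ σ, f (Y.piecewise τ σ) → f (Y.piecewise τ' σ)) :
    subCount f Y ≤ #G := by
  have key : ∀ h : {h : (V → Bool) → Prop |
      (∃ τ : V → Bool, h = fun σ => f (Y.piecewise τ σ)) ∧ ∃ σ : V → Bool, h σ},
      ∃ τ, h.1 = (fun σ => f (Y.piecewise τ σ)) ∧ κ τ ∈ G := by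
    rintro ⟨_, ⟨τ, rfl⟩, σ, hσ⟩
    exact ⟨τ, rfl, hG τ σ hσ⟩
  choose τ hτ hτG using key
  rw [subCount, ← Nat.card_eq_finsetCard]
  refine Nat.card_le_card_of_injective (fun h => ⟨κ (τ h), hτG h⟩) fun h h' hhh' => ?_
  have hκτ : κ (τ h) = κ (τ h') := congrArg Subtype.val hhh'
  exact Subtype.ext <| (hτ h).trans <| ((hτ h').trans <| funext fun σ =>
    propext ⟨hκ _ _ hκτ.symm σ, hκ _ _ hκτ σ⟩).symm

end Subfunctions

theorem Finset.piecewise_decide_mem {V : Type} [DecidableEq V] {Y A Z : Finset V}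
    (hA : A ⊆ Y) (hZ : Disjoint Z Y) :
    Y.piecewise (fun i => decide (i ∈ A)) (fun i => decide (i ∈ Z)) =
      fun i => decide (i ∈ A ∪ Z) := by
  funext i
  by_cases hi : i ∈ Y
  · simp [hi, disjoint_right.1 hZ hi]
  · have hiA : i ∉ A := fun h => hi (hA h)
    simp [hi, hiA]

theorem HWB_decide_mem_iff {n : ℕ} {U : Finset ℕ} (hU : U ⊆ Icc 1 n) :
    HWB n (fun i => decide (i ∈ U)) ↔ #U ∈ U := by
  have hsum : (∑ i ∈ Icc 1 n, if decide (i ∈ U) = true then 1 else 0) = #U := by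
    simp only [decide_eq_true_eq, sum_boole, filter_mem_eq_inter, inter_eq_right.2 hU, Nat.cast_id]
  rw [HWB, hsum, decide_eq_true_iff]
  exact ⟨And.right, fun h => ⟨card_pos.2 ⟨_, h⟩, h⟩⟩

theorem HWB_piecewise_decide_mem_iff {n : ℕ} {Y A Z : Finset ℕ} (hY : Y ⊆ Icc 1 n) (hA : A ⊆ Y)
    (hZ : Z ⊆ Icc 1 n \ Y) :
    HWB n (Y.piecewise (fun i => decide (i ∈ A)) (fun i => decide (i ∈ Z))) ↔
      #A + #Z ∈ A ∪ Z := by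
  have hZY : Disjoint Z Y := disjoint_of_subset_left hZ sdiff_disjoint
  rw [piecewise_decide_mem hA hZY,
    HWB_decide_mem_iff (union_subset (hA.trans hY) (hZ.trans sdiff_subset)),
    card_union_of_disjoint (disjoint_of_subset_left hA hZY.symm)]

theorem HWB_piecewise_decide_mem_iff_of_card_add_card {n i : ℕ} {Y A Z : Finset ℕ}
    (hY : Y ⊆ Icc 1 n) (hA : A ⊆ Y) (hZ : Z ⊆ Icc 1 n \ Y) (hi : i ∈ Y) (hcard : #A + #Z = i) :
    HWB n (Y.piecewise (fun k => decide (k ∈ A)) (fun k => decide (k ∈ Z))) ↔ i ∈ A := by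
  rw [HWB_piecewise_decide_mem_iff hY hA hZ, hcard, mem_union,
    or_iff_left fun h => (mem_sdiff.1 (hZ h)).2 hi]

theorem Nat.two_pow_le_centralBinom : ∀ j : ℕ, 2 ^ j ≤ j.centralBinom
  | 0 => by simp
  | j + 1 => by
    have hstep : (j + 1) * (2 * j.centralBinom) ≤ (j + 1) * (j + 1).centralBinom := by
      rw [Nat.succ_mul_centralBinom_succ]
      nlinarith [j.centralBinom_pos]
    calc 2 ^ (j + 1) = 2 * 2 ^ j := by ring
      _ ≤ 2 * j.centralBinom := by gcongr; exact Nat.two_pow_le_centralBinom j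
      _ ≤ (j + 1).centralBinom := Nat.le_of_mul_le_mul_left hstep j.succ_pos

theorem centralBinom_le_subCount_HWB {n j w : ℕ} {Y : Finset ℕ} (hY : Y ⊆ Icc 1 n) (hj : 0 < j)
    (hjw : j ≤ w) (hwY : w + j ≤ #Y) (hwin : 2 * j ≤ #(Y ∩ Icc w (w + (n - #Y)))) :
    j.centralBinom ≤ subCount (HWB n) Y := by
  obtain ⟨D, hDwin, hD⟩ := exists_subset_card_eq hwin
  have hDY : D ⊆ Y := hDwin.trans inter_subset_left
  obtain ⟨F, hFY, hF⟩ : ∃ F ⊆ Y \ D, #F = w - j :=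
    exists_subset_card_eq (by rw [card_sdiff_of_subset hDY]; omega)
  have hprobe : ∀ i ∈ D, ∃ σ, ∀ S ∈ powersetCard j D,
      (HWB n (Y.piecewise (fun k => decide (k ∈ S ∪ F)) σ) ↔ i ∈ S) := by
    intro i hi
    have hiw := mem_Icc.1 (mem_inter.1 (hDwin hi)).2
    obtain ⟨Z, hZ, hZcard⟩ : ∃ Z ⊆ Icc 1 n \ Y, #Z = i - w :=
      exists_subset_card_eq (by rw [card_sdiff_of_subset hY, Nat.card_Icc]; omega)
    refine ⟨fun k => decide (k ∈ Z), fun S hS => ?_⟩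
    obtain ⟨hSD, hScard⟩ := mem_powersetCard.1 hS
    have hSF : #(S ∪ F) = w := by
      rw [card_union_of_disjoint (disjoint_of_subset_left hSD (subset_sdiff.1 hFY).2.symm)]
      omega
    rw [HWB_piecewise_decide_mem_iff_of_card_add_card hY
        (union_subset (hSD.trans hDY) (hFY.trans sdiff_subset)) hZ (hDY hi) (by omega),
      mem_union, or_iff_left fun h => (mem_sdiff.1 (hFY h)).2 hi]
  calc j.centralBinom = #(powersetCard j D) := by
        rw [card_powersetCard, hD, Nat.centralBinom_eq_two_mul_choose]
    _ ≤ subCount (HWB n) Y := by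
      refine card_le_subCount _ (fun S k => decide (k ∈ S ∪ F)) (fun S hS => ?_) ?_
      · obtain ⟨i, hiS⟩ := card_pos.1 ((mem_powersetCard.1 hS).2 ▸ hj)
        obtain ⟨σ, hσ⟩ := hprobe i ((mem_powersetCard.1 hS).1 hiS)
        exact ⟨σ, (hσ S hS).2 hiS⟩
      · intro S hS S' hS' hSS'
        by_contra hne
        obtain ⟨i, hiS, hiS'⟩ : ∃ i ∈ S, i ∉ S' := by
          by_contra! h
          exact hne (eq_of_subset_of_card_le h
            (by rw [(mem_powersetCard.1 hS).2, (mem_powersetCard.1 hS').2]))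
        obtain ⟨σ, hσ⟩ := hprobe i ((mem_powersetCard.1 hS).1 hiS)
        exact hiS' ((hσ S' hS').1 (cast (congrFun hSS' σ) ((hσ S hS).2 hiS)))

theorem exists_two_mul_le_card_inter_Icc {n j : ℕ} {Y : Finset ℕ} (hY : Y ⊆ Icc 1 n)
    (hYn : 2 * #Y ≤ n) (hj : 6 * j ≤ #Y) :
    ∃ w, j ≤ w ∧ w + j ≤ #Y ∧ 2 * j ≤ #(Y ∩ Icc w (w + (n - #Y))) := by
  set m := #Y
  have hcover : Y ⊆ Ico 1 j ∪ (Y ∩ Icc j (j + (n - m))) ∪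
      (Y ∩ Icc (m - j) (m - j + (n - m))) ∪ Ioc (n - j) n := by
    intro i hi
    have := mem_Icc.1 (hY hi)
    simp only [mem_union, mem_inter, hi, true_and, mem_Icc, mem_Ico, mem_Ioc]
    omega
  have h1 := card_le_card hcover
  have h2 := card_union_le (Ico 1 j ∪ (Y ∩ Icc j (j + (n - m))) ∪
      (Y ∩ Icc (m - j) (m - j + (n - m)))) (Ioc (n - j) n)
  have h3 := card_union_le (Ico 1 j ∪ (Y ∩ Icc j (j + (n - m))))
      (Y ∩ Icc (m - j) (m - j + (n - m)))
  have h4 := card_union_le (Ico 1 j) (Y ∩ Icc j (j + (n - m)))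
  simp only [Nat.card_Ico, Nat.card_Ioc] at h2 h4
  by_cases hleft : 2 * j ≤ #(Y ∩ Icc j (j + (n - m)))
  · exact ⟨j, le_rfl, by omega, hleft⟩
  · exact ⟨m - j, by omega, by omega, by omega⟩

theorem two_le_subCount_HWB_pair {n p q : ℕ} (hn : 5 ≤ n) (hp : 1 ≤ p) (hpq : p < q)
    (hq : q ≤ n) : 2 ≤ subCount (HWB n) {p, q} := by
  set Y : Finset ℕ := {p, q}
  have hY : Y ⊆ Icc 1 n := by
    intro i hi
    simp only [Y, mem_insert, mem_singleton] at hi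
    rw [mem_Icc]
    omega
  have hcompl : #(Icc 1 n \ Y) = n - 2 := by
    rw [card_sdiff_of_subset hY, Nat.card_Icc, card_pair hpq.ne]
    omega
  obtain ⟨Zp, hZp, hZpcard⟩ : ∃ Zp ⊆ Icc 1 n \ Y, #Zp = p - 1 :=
    exists_subset_card_eq (by omega)
  have hsep : ∀ x ∈ Y,
      (HWB n (Y.piecewise (fun k => decide (k ∈ ({x} : Finset ℕ))) (fun k => decide (k ∈ Zp))) ↔
        x = p) := fun x hx => by
    rw [HWB_piecewise_decide_mem_iff_of_card_add_card hY (singleton_subset_iff.2 hx) hZp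
      (mem_insert_self p _) (by rw [card_singleton]; omega), mem_singleton, eq_comm]
  -- a position `i ∈ [2, 4]` outside `Y` can be made the weight by ones outside `Y` alone
  obtain ⟨i, hi2, hi4, hip, hiq⟩ : ∃ i, 2 ≤ i ∧ i ≤ 4 ∧ i ≠ p ∧ i ≠ q := by
    by_cases h2 : p ≠ 2 ∧ q ≠ 2
    · exact ⟨2, le_rfl, by omega, h2.1.symm, h2.2.symm⟩
    by_cases h3 : p ≠ 3 ∧ q ≠ 3
    · exact ⟨3, by omega, by omega, h3.1.symm, h3.2.symm⟩
    · exact ⟨4, by omega, le_rfl, by omega, by omega⟩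
  obtain ⟨Z, hiZ, hZ, hZcard⟩ : ∃ Z, {i} ⊆ Z ∧ Z ⊆ Icc 1 n \ Y ∧ #Z = i - 1 :=
    exists_subsuperset_card_eq
      (singleton_subset_iff.2 (by simp [Y, mem_Icc]; omega)) (by simp; omega) (by omega)
  rw [← card_pair hpq.ne]
  refine card_le_subCount _ (fun x k => decide (k ∈ ({x} : Finset ℕ))) (fun x hx => ?_) ?_
  · refine ⟨_, (HWB_piecewise_decide_mem_iff hY (singleton_subset_iff.2 hx) hZ).2 ?_⟩
    rw [card_singleton, hZcard, show 1 + (i - 1) = i by omega]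
    exact mem_union_right _ (singleton_subset_iff.1 hiZ)
  · intro x hx y hy hxy
    have h := congrFun hxy fun k => decide (k ∈ Zp)
    simp only [eq_iff_iff, hsep x hx, hsep y hy] at h
    simp only [coe_insert, coe_singleton, Set.mem_insert_iff, Set.mem_singleton_iff] at hx hy
    omega

/-- `|Y| > n/4` and `j = |Y|/6` give `48 j ≥ n` once `n ≥ 48`; below that `j = 1` suffices. -/
theorem exists_isNode_pow_le_subCount_HWB {n : ℕ} (hn : 5 ≤ n) {T : Vtree ℕ} (hT : T.Proper)
    (hvars : T.vars = Icc 1 n) :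
    ∃ l r, T.IsNode (.node l r) ∧
      ∃ j, n ≤ 48 * j ∧ 2 ^ j ≤ subCount (HWB n) (Vtree.node l r).vars := by
  have hTcard : #T.vars = n := by rw [hvars, Nat.card_Icc]; omega
  rcases lt_or_ge n 48 with hsmall | hbig
  · rcases T.eq_leaf_or_exists_isNode_node_leaf_leaf with ⟨x, rfl⟩ | ⟨p, q, hpq⟩
    · simp only [Vtree.vars, card_singleton] at hTcard
      omega
    refine ⟨_, _, hpq, 1, by omega, ?_⟩
    have hsub := hvars ▸ hpq.vars_subset
    have hne : p ≠ q := disjoint_singleton.1 (hpq.proper hT).2.2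
    simp only [Vtree.vars, union_subset_iff, singleton_subset_iff, mem_Icc] at hsub ⊢
    rcases hne.lt_or_gt with h | h
    · exact two_le_subCount_HWB_pair hn hsub.1.1 h hsub.2.2
    · rw [union_comm]
      exact two_le_subCount_HWB_pair hn hsub.2.1 h hsub.1.2
  · obtain ⟨t, ht, hlo, hhi⟩ := Vtree.exists_isNode_card_vars_le hT (K := n / 4 + 1) (by omega)
      (by omega)
    cases t with
    | leaf x => simp only [Vtree.vars, card_singleton] at hlo; omega
    | node l r =>
      have hY := hvars ▸ ht.vars_subset
      obtain ⟨w, hjw, hwY, hwin⟩ :=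
        exists_two_mul_le_card_inter_Icc hY (j := #(Vtree.node l r).vars / 6) (by omega) (by omega)
      exact ⟨l, r, ht, _, by omega, (Nat.two_pow_le_centralBinom _).trans
        (centralBinom_le_subCount_HWB hY (by omega) hjw hwY hwin)⟩

theorem exists_isNode_two_rpow_le_subCount_HWB {n : ℕ} (hn : 5 ≤ n) {T : Vtree ℕ}
    (hT : T.Proper) (hvars : T.vars = Icc 1 n) :
    ∃ l r, T.IsNode (.node l r) ∧
      (2 : ℝ) ^ ((1 / 48 : ℝ) * n) ≤ subCount (HWB n) (Vtree.node l r).vars := by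
  obtain ⟨l, r, ht, j, hnj, hj⟩ := exists_isNode_pow_le_subCount_HWB hn hT hvars
  refine ⟨l, r, ht, ?_⟩
  calc (2 : ℝ) ^ ((1 / 48 : ℝ) * n) ≤ 2 ^ (j : ℝ) := by
        apply Real.rpow_le_rpow_of_exponent_le one_le_two
        have : (n : ℝ) ≤ 48 * j := by exact_mod_cast hnj
        linarith
    _ = (2 ^ j : ℕ) := by norm_cast
    _ ≤ subCount (HWB n) (Vtree.node l r).vars := by exact_mod_cast hj

namespace NTDD

variable {V : Type}

theorem WF.subdiagram {C D : NTDD V} (hC : C.WF) (hD : C.Subdiagram D) : D.WF := by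
  induction C with
  | leaf => rwa [hD]
  | node l r ns E ihl ihr =>
    rcases hD with rfl | hD | hD
    · exact hC
    · exact ihl hC.1 hD
    · exact ihr hC.2.1 hD

theorem Det.subdiagram {C D : NTDD V} (hC : C.Det) (hD : C.Subdiagram D) : D.Det := by
  induction C with
  | leaf => rwa [hD]
  | node l r ns E ihl ihr =>
    rcases hD with rfl | hD | hD
    · exact hC
    · exact ihl hC.1 hD
    · exact ihr hC.2.1 hD

theorem Subdiagram.isNode_shape {C D : NTDD V} (hD : C.Subdiagram D) :
    C.shape.IsNode D.shape := by
  induction C with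
  | leaf => rw [hD]; rfl
  | node l r ns E ihl ihr =>
    rcases hD with rfl | hD | hD
    · exact Vtree.isNode_self _
    · exact Or.inr (Or.inl (ihl hD))
    · exact Or.inr (Or.inr (ihr hD))

theorem exists_subdiagram_shape_eq {C : NTDD V} {t : Vtree V} (h : C.shape.IsNode t) :
    ∃ D, C.Subdiagram D ∧ D.shape = t := by
  induction C with
  | leaf x ns lab => exact ⟨_, rfl, h.symm⟩
  | node l r ns E ihl ihr =>
    rcases h with h | h | h
    · exact ⟨_, Or.inl rfl, h.symm⟩
    · obtain ⟨D, hD, hDt⟩ := ihl h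
      exact ⟨D, Or.inr (Or.inl hD), hDt⟩
    · obtain ⟨D, hD, hDt⟩ := ihr h
      exact ⟨D, Or.inr (Or.inr hD), hDt⟩

theorem Subdiagram.sum_card_le_size {C l r : NTDD V} {ns : Finset ℕ} {E : ℕ → Finset (ℕ × ℕ)}
    (hD : C.Subdiagram (node l r ns E)) : ∑ g ∈ ns, #(E g) ≤ C.size := by
  induction C with
  | leaf => cases hD
  | node l' r' ns' E' ihl ihr =>
    simp only [size]
    rcases hD with h | hD | hD
    · cases h
      omega
    · have := ihl hD
      omega
    · have := ihr hD
      omega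

theorem Subdiagram.exists_sat {C D : NTDD V} (hC : C.WF) (hD : C.Subdiagram D) {g : ℕ}
    (hg : g ∈ C.nodes) {ρ : V → Bool} (hsat : C.sat g ρ) : ∃ g' ∈ D.nodes, D.sat g' ρ := by
  induction C generalizing g with
  | leaf => rw [hD]; exact ⟨g, hg, hsat⟩
  | node l r ns E ihl ihr =>
    obtain ⟨p, hp, hl, hr⟩ := hsat
    rcases hD with rfl | hD | hD
    · exact ⟨g, hg, p, hp, hl, hr⟩
    · exact ihl hC.1 hD (hC.2.2 g hg p hp).1 hl
    · exact ihr hC.2.1 hD (hC.2.2 g hg p hp).2 hr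

theorem eq_of_sat {D : NTDD V} (hWF : D.WF) (hDet : D.Det) {ρ : V → Bool} {g g' : ℕ}
    (hg : g ∈ D.nodes) (hg' : g' ∈ D.nodes) (hs : D.sat g ρ) (hs' : D.sat g' ρ) : g = g' := by
  induction D generalizing g g' with
  | leaf x ns lab =>
    obtain ⟨hpos, hneg, hone, hzero⟩ := hDet
    by_contra hne
    cases h : lab g <;> cases h' : lab g' <;> simp only [sat, h, h'] at hs hs'
    all_goals first
      | exact hne (hpos g hg g' hg' h h')
      | exact hne (hneg g hg g' hg' h h')
      | exact hne (hone g hg g' hg' h h')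
      | exact Bool.false_ne_true (hs'.symm.trans hs)
      | exact Bool.false_ne_true (hs.symm.trans hs')
      | cases (hzero g hg h g' hg' (Ne.symm hne)).symm.trans h'
      | cases (hzero g' hg' h' g hg hne).symm.trans h
  | node l r ns E ihl ihr =>
    obtain ⟨p, hp, hl, hr⟩ := hs
    obtain ⟨p', hp', hl', hr'⟩ := hs'
    have hpp' : p = p' := Prod.ext
      (ihl hWF.1 hDet.1 (hWF.2.2 g hg p hp).1 (hWF.2.2 g' hg' p' hp').1 hl hl')
      (ihr hWF.2.1 hDet.2.1 (hWF.2.2 g hg p hp).2 (hWF.2.2 g' hg' p' hp').2 hr hr')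
    by_contra hne
    exact disjoint_left.1 (hDet.2.2 g hg g' hg' hne) hp (hpp' ▸ hp')

variable [DecidableEq V]

theorem sat_congr {D : NTDD V} {g : ℕ} {ρ ρ' : V → Bool}
    (h : ∀ i ∈ D.shape.vars, ρ i = ρ' i) : D.sat g ρ ↔ D.sat g ρ' := by
  induction D generalizing g with
  | leaf x ns lab =>
    simp only [shape, Vtree.vars, mem_singleton, forall_eq] at h
    simp only [sat, h]
  | node l r ns E ihl ihr =>
    simp only [shape, Vtree.vars, mem_union] at h
    exact exists_congr fun p => and_congr_right fun _ =>
      and_congr (ihl fun i hi => h i (Or.inl hi)) (ihr fun i hi => h i (Or.inr hi))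

theorem Subdiagram.sat_of_sat {C D : NTDD V} (hC : C.shape.Proper) (hWF : C.WF)
    (hD : C.Subdiagram D) {ρ ρ' : V → Bool} (hout : ∀ i ∉ D.shape.vars, ρ i = ρ' i)
    (hin : ∀ g ∈ D.nodes, D.sat g ρ ↔ D.sat g ρ') {h : ℕ} (hh : h ∈ C.nodes)
    (hsat : C.sat h ρ) : C.sat h ρ' := by
  induction C generalizing h with
  | leaf => rw [hD] at hin; exact (hin h hh).1 hsat
  | node l r ns E ihl ihr =>
    obtain ⟨p, hp, hl, hr⟩ := hsat
    have hpl := (hWF.2.2 h hh p hp).1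
    have hpr := (hWF.2.2 h hh p hp).2
    rcases hD with rfl | hD | hD
    · exact (hin h hh).1 ⟨p, hp, hl, hr⟩
    · refine ⟨p, hp, ihl hC.1 hWF.1 hD hpl hl, (sat_congr fun i hi => hout i fun hiD => ?_).1 hr⟩
      exact disjoint_left.1 hC.2.2 (hD.isNode_shape.vars_subset hiD) hi
    · refine ⟨p, hp, (sat_congr fun i hi => hout i fun hiD => ?_).1 hl,
        ihr hC.2.1 hWF.2.1 hD hpr hr⟩
      exact disjoint_right.1 hC.2.2 (hD.isNode_shape.vars_subset hiD) hi

theorem subCount_sat_le_size_of_subdiagram {C l r : NTDD V} {ns : Finset ℕ}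
    {E : ℕ → Finset (ℕ × ℕ)} (hC : C.shape.Proper) (hWF : C.WF) (hDet : C.Det) {out : ℕ}
    (hout : out ∈ C.nodes) (hD : C.Subdiagram (node l r ns E)) :
    subCount (C.sat out) (node l r ns E).shape.vars ≤ C.size := by
  classical
  set D := node l r ns E
  set Y := D.shape.vars
  have hpw : ∀ τ σ g, D.sat g (Y.piecewise τ σ) ↔ D.sat g τ := fun τ σ g =>
    sat_congr fun i hi => piecewise_eq_of_mem _ _ _ hi
  calc subCount (C.sat out) Y ≤ #((ns.filter fun g => (E g).Nonempty).image singleton) := by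
        refine subCount_le_card (fun τ => ns.filter fun g => D.sat g τ) _ ?_ ?_
        · intro τ σ hσ
          obtain ⟨g, hg, hsat⟩ := hD.exists_sat hWF hout hσ
          rw [hpw] at hsat
          obtain ⟨p, hp, -⟩ := id hsat
          refine mem_image.2 ⟨g, mem_filter.2 ⟨hg, p, hp⟩, Eq.symm ?_⟩
          refine eq_singleton_iff_unique_mem.2 ⟨mem_filter.2 ⟨hg, hsat⟩, fun g' hg' => ?_⟩
          exact eq_of_sat (hWF.subdiagram hD) (hDet.subdiagram hD) (mem_filter.1 hg').1 hg
            (mem_filter.1 hg').2 hsat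
        · intro τ τ' hκ σ hσ
          refine hD.sat_of_sat hC hWF (fun i hi =>
            (piecewise_eq_of_notMem _ _ _ hi).trans (piecewise_eq_of_notMem _ _ _ hi).symm)
            (fun g hg => ?_) hout hσ
          have hg : g ∈ ns := hg
          simpa [hpw, hg] using congrArg (g ∈ ·) hκ
    _ ≤ #(ns.filter fun g => (E g).Nonempty) := card_image_le
    _ ≤ ∑ g ∈ ns, #(E g) := by
        rw [card_filter]
        exact sum_le_sum fun g _ => by split_ifs with h <;> simp [h]
    _ ≤ C.size := hD.sum_card_le_size

theorem subCount_sat_le_size {C : NTDD V} (hC : C.shape.Proper) (hWF : C.WF) (hDet : C.Det)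
    {out : ℕ} (hout : out ∈ C.nodes) {a b : Vtree V} (ht : C.shape.IsNode (.node a b)) :
    subCount (C.sat out) (Vtree.node a b).vars ≤ C.size := by
  obtain ⟨D, hD, hDt⟩ := exists_subdiagram_shape_eq ht
  cases D with
  | leaf => cases hDt
  | node l r ns E => exact hDt ▸ subCount_sat_le_size_of_subdiagram hC hWF hDet hout hD

end NTDD

/-- There is a constant `c > 0` such that for every `n`
divisible by 7 and every vtree `T` over `{x_1, …, x_n}`, the factor width of
`HWB_n` with respect to `T` is at least `2^(c·n)` (i.e. at some node `t` of
`T` there are at least `2^(c·n)` non-trivial `X_t`-subfunctions); in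
particular, every TDD computing `HWB_n`, respecting any vtree over
`{x_1, …, x_n}`, has size at least `2^(c·n)`. -/
theorem stmt19 :
    ∃ c : ℝ, 0 < c ∧ ∀ n : ℕ, 7 ∣ n →
      (∀ T : Vtree ℕ, T.Proper → T.vars = Finset.Icc 1 n →
        ∃ t : Vtree ℕ, T.IsNode t ∧
          (2 : ℝ) ^ (c * n) ≤ (subCount (HWB n) t.vars : ℝ)) ∧
      (∀ (T : Vtree ℕ) (C : NTDD ℕ) (out : ℕ),
        T.Proper → T.vars = Finset.Icc 1 n →
        C.shape = T → C.WF → C.Det → out ∈ C.nodes →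
        (∀ τ : ℕ → Bool, (C.sat out τ ↔ HWB n τ)) →
        (2 : ℝ) ^ (c * n) ≤ (C.size : ℝ)) := by
  refine ⟨1 / 48, by norm_num, fun n hn => ?_⟩
  have key : ∀ T : Vtree ℕ, T.Proper → T.vars = Icc 1 n → ∃ l r, T.IsNode (.node l r) ∧
      (2 : ℝ) ^ ((1 / 48 : ℝ) * n) ≤ subCount (HWB n) (Vtree.node l r).vars := by
    intro T hT hvars
    have hpos : 1 ≤ n := by simpa [hvars] using T.vars_nonempty
    exact exists_isNode_two_rpow_le_subCount_HWB (by have := Nat.le_of_dvd hpos hn; omega) hT hvars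
  refine ⟨fun T hT hvars => ?_, fun T C out hT hvars hshape hWF hDet hout hC => ?_⟩
  · obtain ⟨l, r, ht, hbound⟩ := key T hT hvars
    exact ⟨_, ht, hbound⟩
  · subst hshape
    obtain ⟨a, b, ht, hbound⟩ := key C.shape hT hvars
    have hf : C.sat out = HWB n := funext fun τ => propext (hC τ)
    have hsize := NTDD.subCount_sat_le_size hT hWF hDet hout ht
    rw [hf] at hsize
    exact hbound.trans (by exact_mod_cast hsize)
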